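/- The group presented by ⟨a, b | a^2 = b^2, a^b = a^3⟩ is isomorphic to the quaternion group Q8 of order 8. -/

import Mathlib

/-!
Conjugation by `b` fixes `b² = a²`, but sends `a²` to `a⁶`; hence `a⁴ = 1` and `a^b = a³ = a⁻¹`.
So `a`, `b` satisfy the defining relations of `Q₈ = ⟨x, y | x⁴ = 1, y² = x², x^y = x⁻¹⟩`, which gives
a homomorphism `Q₈ → A_2` inverse to the obvious one `A_2 → Q₈`.
-/

/-- The relations of the group `A_2 = ⟨a, b | a² = b², a^b = a³⟩`. -/
def A2Rels : Set (FreeGroup (Fin 2)) :=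
  {FreeGroup.of 0 ^ 2 * (FreeGroup.of 1 ^ 2)⁻¹,
   (FreeGroup.of 1)⁻¹ * FreeGroup.of 0 * FreeGroup.of 1 * (FreeGroup.of 0 ^ 3)⁻¹}

section ZModPow

variable {H : Type*} [Group H] {m : ℕ} {a : H}

-- Only additive in `i` when `a ^ m = 1`.
def zmodPow (a : H) (i : ZMod m) : H := a ^ (i.cast : ℤ)

lemma zmodPow_intCast (ha : a ^ m = 1) (k : ℤ) : zmodPow a (k : ZMod m) = a ^ k := by
  rw [zmodPow, ZMod.coe_intCast, ← zpow_eq_zpow_emod' k ha]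

lemma zmodPow_natCast (ha : a ^ m = 1) (k : ℕ) : zmodPow a (k : ZMod m) = a ^ k := by
  exact_mod_cast zmodPow_intCast ha k

lemma zmodPow_add (ha : a ^ m = 1) (i j : ZMod m) :
    zmodPow a (i + j) = zmodPow a i * zmodPow a j := by
  obtain ⟨k, rfl⟩ := ZMod.intCast_surjective i
  obtain ⟨l, rfl⟩ := ZMod.intCast_surjective j
  rw [← Int.cast_add, zmodPow_intCast ha, zmodPow_intCast ha, zmodPow_intCast ha, zpow_add]

lemma map_zmodPow {K : Type*} [Group K] (f : H →* K) (i : ZMod m) :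
    f (zmodPow a i) = zmodPow (f a) i :=
  map_zpow f a _

end ZModPow

lemma zpow_mul_eq_mul_zpow_neg {H : Type*} [Group H] {a b : H} (hab : b⁻¹ * a * b = a⁻¹) (k : ℤ) :
    a ^ k * b = b * a ^ (-k) := by
  have h := conj_zpow (a := b⁻¹) (b := a) (i := k)
  rw [inv_inv, hab, inv_zpow, ← zpow_neg] at h
  rw [h]; group

namespace QuaternionGroup

variable {n : ℕ}

lemma a_one_zpow (k : ℤ) : (a 1 : QuaternionGroup n) ^ k = a k := by
  cases k with
  | ofNat k => simp [a_one_pow]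
  | negSucc k => rw [zpow_negSucc, a_one_pow, Int.cast_negSucc]; rfl

lemma zmodPow_a_one (i : ZMod (2 * n)) : zmodPow (a 1) i = a i := by
  rw [zmodPow, a_one_zpow, ZMod.intCast_zmod_cast]

variable {H : Type*} [Group H] {x y : H}

def lift (hx : x ^ (2 * n) = 1) (hy : y ^ 2 = x ^ n) (hxy : y⁻¹ * x * y = x⁻¹) :
    QuaternionGroup n →* H where
  toFun
    | .a i => zmodPow x i
    | .xa i => y * zmodPow x i
  map_one' := show zmodPow x 0 = 1 by simp [zmodPow]
  map_mul' := by
    have hcomm (i : ZMod (2 * n)) : zmodPow x i * y = y * zmodPow x (-i) := by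
      obtain ⟨k, rfl⟩ := ZMod.intCast_surjective i
      rw [← Int.cast_neg, zmodPow_intCast hx, zmodPow_intCast hx, zpow_mul_eq_mul_zpow_neg hxy]
    rintro (i | i) (j | j)
    · exact zmodPow_add hx i j
    · show y * zmodPow x (j - i) = zmodPow x i * (y * zmodPow x j)
      rw [← mul_assoc, hcomm, mul_assoc, ← zmodPow_add hx, neg_add_eq_sub]
    · show y * zmodPow x (i + j) = y * zmodPow x i * zmodPow x j
      rw [mul_assoc, zmodPow_add hx]
    · show zmodPow x ((n : ZMod (2 * n)) + j - i) = y * zmodPow x i * (y * zmodPow x j)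
      rw [mul_assoc, ← mul_assoc (zmodPow x i), hcomm, ← mul_assoc, ← mul_assoc, ← sq, hy,
        ← zmodPow_natCast hx, mul_assoc, ← zmodPow_add hx, ← zmodPow_add hx, neg_add_eq_sub,
        add_sub_assoc]

@[simp] lemma lift_a (hx : x ^ (2 * n) = 1) (hy : y ^ 2 = x ^ n) (hxy : y⁻¹ * x * y = x⁻¹)
    (i : ZMod (2 * n)) : lift hx hy hxy (a i) = zmodPow x i := rfl

@[simp] lemma lift_xa (hx : x ^ (2 * n) = 1) (hy : y ^ 2 = x ^ n) (hxy : y⁻¹ * x * y = x⁻¹)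
    (i : ZMod (2 * n)) : lift hx hy hxy (xa i) = y * zmodPow x i := rfl

end QuaternionGroup

lemma pow_four_eq_one_of_sq_eq_sq_of_conj_eq_pow_three {G : Type*} [Group G] {x y : G}
    (h₁ : x ^ 2 = y ^ 2) (h₂ : y⁻¹ * x * y = x ^ 3) : x ^ 4 = 1 := by
  have h : x ^ 6 = x ^ 2 :=
    calc x ^ 6 = (y⁻¹ * x * y) ^ 2 := by rw [h₂, ← pow_mul]
      _ = y⁻¹ * x ^ 2 * y := by rw [sq, sq]; group
      _ = y ^ 2 := by rw [h₁]; group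
      _ = x ^ 2 := h₁.symm
  rw [show 6 = 2 + 4 by rfl, pow_add, mul_eq_left] at h
  exact h

namespace A2

open QuaternionGroup PresentedGroup

lemma of_zero_sq : (of 0 : PresentedGroup A2Rels) ^ 2 = of 1 ^ 2 := by
  have h := one_of_mem (rels := A2Rels) (Set.mem_insert _ _)
  simp only [map_mul, map_pow, map_inv, mul_inv_eq_one] at h
  exact h

lemma conj_of_zero : (of 1 : PresentedGroup A2Rels)⁻¹ * of 0 * of 1 = of 0 ^ 3 := by
  have h := one_of_mem (rels := A2Rels) (Set.mem_insert_of_mem _ rfl)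
  simp only [map_mul, map_pow, map_inv, mul_inv_eq_one] at h
  exact h

lemma of_zero_pow_four : (of 0 : PresentedGroup A2Rels) ^ 4 = 1 :=
  pow_four_eq_one_of_sq_eq_sq_of_conj_eq_pow_three of_zero_sq conj_of_zero

lemma conj_of_zero_eq_inv : (of 1 : PresentedGroup A2Rels)⁻¹ * of 0 * of 1 = (of 0)⁻¹ := by
  rw [conj_of_zero, eq_inv_iff_mul_eq_one, ← pow_succ, of_zero_pow_four]

def toQuaternion : PresentedGroup A2Rels →* QuaternionGroup 2 :=
  toGroup (f := ![a 1, xa 0]) (by rintro r (rfl | rfl) <;> decide)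

def ofQuaternion : QuaternionGroup 2 →* PresentedGroup A2Rels :=
  lift of_zero_pow_four of_zero_sq.symm conj_of_zero_eq_inv

lemma ofQuaternion_comp_toQuaternion : ofQuaternion.comp toQuaternion = .id _ := by
  refine PresentedGroup.ext fun i => ?_
  fin_cases i
  · simpa [toQuaternion, ofQuaternion] using zmodPow_natCast of_zero_pow_four 1
  · simp [toQuaternion, ofQuaternion, zmodPow]

lemma toQuaternion_comp_ofQuaternion : toQuaternion.comp ofQuaternion = .id _ := by
  have h0 : toQuaternion (of 0) = a 1 := toGroup.of _
  have h1 : toQuaternion (of 1) = xa 0 := toGroup.of _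
  ext (i | i) <;> simp [ofQuaternion, map_zmodPow, h0, h1, zmodPow_a_one]

end A2

theorem stmt_5 : Nonempty (PresentedGroup A2Rels ≃* QuaternionGroup 2) :=
  ⟨MonoidHom.toMulEquiv _ _ A2.ofQuaternion_comp_toQuaternion A2.toQuaternion_comp_ofQuaternion⟩
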